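/- arXiv:2504.00826 — 4 statements merged into one kernel-verified Lean document; each statement's English description precedes it below -/
import Mathlib

section
/- Let X = ℝ² equipped with the ℓ¹ norm ‖(a, b)‖ = |a| + |b|. Then for every t ∈ [0, 1/2), L_X(t) = 2t² − 4t + 2. -/
/-!
Writing `t • x + (1 - t) • y = ½ (x + y) + ((1 - 2t)/2) (y - x)`, the triangle inequality and
`‖x - y‖ = ‖x + y‖` give `‖t • x + (1 - t) • y‖ ≤ (1 - t) ‖x + y‖`, and symmetrically for the other
convex combination, so `L_X(t) ≤ 2 (1 - t)² = 2t² - 4t + 2` in every normed space. In the `ℓ¹` plane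
the pair `x = (1, 1)`, `y = (1, -1)` attains this bound.
-/

/-- The geometric constant `L_X(t)` defined via isosceles orthogonality. -/
noncomputable def LX (X : Type*) [NormedAddCommGroup X] [NormedSpace ℝ X] (t : ℝ) : ℝ :=
  sSup {r : ℝ | ∃ x y : X, (x, y) ≠ (0, 0) ∧ ‖x + y‖ = ‖x - y‖ ∧
    r = (‖t • x + (1 - t) • y‖ ^ 2 + ‖(1 - t) • x + t • y‖ ^ 2) / ‖x + y‖ ^ 2}

section IsoscelesOrthogonal

variable {X : Type*} [NormedAddCommGroup X] [NormedSpace ℝ X]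

theorem norm_smul_add_one_sub_smul_le {x y : X} (hxy : ‖x + y‖ = ‖x - y‖) {t : ℝ}
    (ht : t ≤ 1 / 2) : ‖t • x + (1 - t) • y‖ ≤ (1 - t) * ‖x + y‖ := by
  have hsplit : t • x + (1 - t) • y = (2⁻¹ : ℝ) • (x + y) + ((1 - 2 * t) / 2) • (y - x) := by
    module
  calc ‖t • x + (1 - t) • y‖
      ≤ ‖(2⁻¹ : ℝ) • (x + y)‖ + ‖((1 - 2 * t) / 2) • (y - x)‖ := hsplit ▸ norm_add_le _ _
    _ = 2⁻¹ * ‖x + y‖ + (1 - 2 * t) / 2 * ‖x - y‖ := by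
        rw [norm_smul, norm_smul, norm_sub_rev, Real.norm_of_nonneg (by norm_num),
          Real.norm_of_nonneg (by linarith)]
    _ = (1 - t) * ‖x + y‖ := by rw [← hxy]; ring

theorem isoscelesRatio_le {x y : X} (hxy : ‖x + y‖ = ‖x - y‖) {t : ℝ} (ht : t ≤ 1 / 2) :
    (‖t • x + (1 - t) • y‖ ^ 2 + ‖(1 - t) • x + t • y‖ ^ 2) / ‖x + y‖ ^ 2 ≤ 2 * (1 - t) ^ 2 := by
  have hyx : ‖y + x‖ = ‖y - x‖ := by rw [add_comm, norm_sub_rev, hxy]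
  have h₁ := norm_smul_add_one_sub_smul_le hxy ht
  have h₂ := norm_smul_add_one_sub_smul_le hyx ht
  rw [add_comm y, add_comm (t • y)] at h₂
  refine div_le_of_le_mul₀ (by positivity) (by positivity) ?_
  calc ‖t • x + (1 - t) • y‖ ^ 2 + ‖(1 - t) • x + t • y‖ ^ 2
      ≤ ((1 - t) * ‖x + y‖) ^ 2 + ((1 - t) * ‖x + y‖) ^ 2 :=
        add_le_add (pow_le_pow_left₀ (norm_nonneg _) h₁ 2) (pow_le_pow_left₀ (norm_nonneg _) h₂ 2)
    _ = 2 * (1 - t) ^ 2 * ‖x + y‖ ^ 2 := by ring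

theorem LX_eq_of_isoscelesRatio_eq {t : ℝ} (ht : t ≤ 1 / 2) {x y : X} (hne : (x, y) ≠ (0, 0))
    (hxy : ‖x + y‖ = ‖x - y‖)
    (hratio : (‖t • x + (1 - t) • y‖ ^ 2 + ‖(1 - t) • x + t • y‖ ^ 2) / ‖x + y‖ ^ 2
      = 2 * (1 - t) ^ 2) :
    LX X t = 2 * (1 - t) ^ 2 := by
  refine IsGreatest.csSup_eq ⟨⟨x, y, hne, hxy, hratio.symm⟩, ?_⟩
  rintro r ⟨x', y', -, hxy', rfl⟩
  exact isoscelesRatio_le hxy' ht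

end IsoscelesOrthogonal

theorem PiLp.norm_toLp_one_fin_two (a b : ℝ) :
    ‖WithLp.toLp 1 ![a, b]‖ = |a| + |b| := by
  simp [PiLp.norm_eq_of_L1, Fin.sum_univ_two]

theorem stmt_1 (t : ℝ) (ht : t ∈ Set.Ico (0 : ℝ) (1 / 2)) :
    LX (PiLp 1 (fun _ : Fin 2 => ℝ)) t = 2 * t ^ 2 - 4 * t + 2 := by
  have ht_le : t ≤ 1 / 2 := ht.2.le
  let x : PiLp 1 (fun _ : Fin 2 => ℝ) := WithLp.toLp 1 ![1, 1]
  let y : PiLp 1 (fun _ : Fin 2 => ℝ) := WithLp.toLp 1 ![1, -1]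
  have hne : (x, y) ≠ (0, 0) := fun h => by
    simpa [x] using congrArg (fun z => z.1 0) h
  have hsum : x + y = WithLp.toLp 1 ![2, 0] := by
    ext i; fin_cases i <;> simp [x, y]; norm_num
  have hdiff : x - y = WithLp.toLp 1 ![0, 2] := by
    ext i; fin_cases i <;> simp [x, y]; norm_num
  have hcomb₁ : t • x + (1 - t) • y = WithLp.toLp 1 ![1, -(1 - 2 * t)] := by
    ext i; fin_cases i <;> simp [x, y]; ring
  have hcomb₂ : (1 - t) • x + t • y = WithLp.toLp 1 ![1, 1 - 2 * t] := by
    ext i; fin_cases i <;> simp [x, y]; ring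
  rw [show 2 * t ^ 2 - 4 * t + 2 = 2 * (1 - t) ^ 2 by ring]
  refine LX_eq_of_isoscelesRatio_eq ht_le hne ?_ ?_
  · simp [hsum, hdiff, PiLp.norm_toLp_one_fin_two]
  · rw [hsum, hcomb₁, hcomb₂]
    simp only [PiLp.norm_toLp_one_fin_two, abs_neg, abs_one, abs_two, abs_zero,
      abs_of_nonneg (by linarith : 0 ≤ 1 - 2 * t)]
    ring
end

section
/- Let X be a real Banach space of dimension at least 2. Then the function t ↦ L_X(t) is continuous on the interval [0, 1/2). -/
open Set NNReal

theorem LipschitzOnWith.ciSup {α ι : Type*} [PseudoMetricSpace α] {f : ι → α → ℝ} {s : Set α}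
    {K : ℝ≥0} (hf : ∀ i, LipschitzOnWith K (f i) s)
    (hbdd : ∀ a ∈ s, BddAbove (range fun i => f i a)) :
    LipschitzOnWith K (fun a => ⨆ i, f i a) s := by
  cases isEmpty_or_nonempty ι
  · simpa only [Real.iSup_of_isEmpty] using (LipschitzWith.const' (0 : ℝ)).lipschitzOnWith
  have le_add_dist : ∀ a ∈ s, ∀ b ∈ s, ⨆ i, f i a ≤ (⨆ i, f i b) + K * dist a b :=
    fun a ha b hb => ciSup_le fun i => calc
      f i a ≤ f i b + dist (f i a) (f i b) := by
        rw [Real.dist_eq]; linarith [le_abs_self (f i a - f i b)]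
      _ ≤ (⨆ i, f i b) + K * dist a b :=
        add_le_add (le_ciSup (hbdd b hb) i) ((hf i).dist_le_mul a ha b hb)
  refine LipschitzOnWith.of_dist_le_mul fun a ha b hb => ?_
  have hba := le_add_dist b hb a ha
  rw [dist_comm] at hba
  rw [Real.dist_eq, abs_sub_le_iff]
  constructor <;> linarith [le_add_dist a ha b hb]

section IsoscelesOrthogonal

variable {X : Type*} [NormedAddCommGroup X] {x y : X}

theorem norm_add_eq_norm_sub_comm (h : ‖x + y‖ = ‖x - y‖) : ‖y + x‖ = ‖y - x‖ := by
  rwa [add_comm, norm_sub_rev]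

theorem abs_norm_sq_sub_norm_sq_le {a b : X} {r : ℝ} (ha : ‖a‖ ≤ r) (hb : ‖b‖ ≤ r) :
    |‖a‖ ^ 2 - ‖b‖ ^ 2| ≤ 2 * r * ‖a - b‖ := by
  rw [sq_sub_sq, abs_mul, abs_of_nonneg (by positivity)]
  exact mul_le_mul (by linarith) (abs_norm_sub_norm_le a b) (abs_nonneg _)
    (by linarith [norm_nonneg a])

variable [NormedSpace ℝ X]

theorem norm_le_norm_add_of_norm_add_eq_norm_sub (h : ‖x + y‖ = ‖x - y‖) : ‖x‖ ≤ ‖x + y‖ := by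
  have : 2 * ‖x‖ ≤ 2 * ‖x + y‖ := calc
    2 * ‖x‖ = ‖(x + y) + (x - y)‖ := by
      rw [show (x + y) + (x - y) = (2 : ℝ) • x by module, norm_smul, Real.norm_two]
    _ ≤ 2 * ‖x + y‖ := by linarith [norm_add_le (x + y) (x - y)]
  linarith

theorem norm_smul_add_one_sub_smul_le_of_norm_add_eq_norm_sub (h : ‖x + y‖ = ‖x - y‖) {t : ℝ}
    (ht : t ∈ Icc (0 : ℝ) 1) : ‖t • x + (1 - t) • y‖ ≤ ‖x + y‖ := by
  have hx := norm_le_norm_add_of_norm_add_eq_norm_sub h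
  have hy : ‖y‖ ≤ ‖x + y‖ := add_comm y x ▸ norm_le_norm_add_of_norm_add_eq_norm_sub
    (norm_add_eq_norm_sub_comm h)
  calc ‖t • x + (1 - t) • y‖ ≤ t * ‖x‖ + (1 - t) * ‖y‖ := by
        refine (norm_add_le _ _).trans_eq ?_
        rw [norm_smul, norm_smul, Real.norm_of_nonneg ht.1, Real.norm_of_nonneg (sub_nonneg.2 ht.2)]
    _ ≤ ‖x + y‖ := by nlinarith [ht.1, ht.2]

theorem abs_norm_sq_sub_norm_sq_le_of_norm_add_eq_norm_sub (h : ‖x + y‖ = ‖x - y‖) {t s : ℝ}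
    (ht : t ∈ Icc (0 : ℝ) 1) (hs : s ∈ Icc (0 : ℝ) 1) :
    |‖t • x + (1 - t) • y‖ ^ 2 - ‖s • x + (1 - s) • y‖ ^ 2| ≤ 2 * ‖x + y‖ ^ 2 * |t - s| := by
  have hdiff : t • x + (1 - t) • y - (s • x + (1 - s) • y) = (t - s) • (x - y) := by module
  calc _ ≤ 2 * ‖x + y‖ * ‖t • x + (1 - t) • y - (s • x + (1 - s) • y)‖ :=
        abs_norm_sq_sub_norm_sq_le (norm_smul_add_one_sub_smul_le_of_norm_add_eq_norm_sub h ht)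
          (norm_smul_add_one_sub_smul_le_of_norm_add_eq_norm_sub h hs)
    _ = 2 * ‖x + y‖ ^ 2 * |t - s| := by
        rw [hdiff, norm_smul, Real.norm_eq_abs, ← h]; ring

variable (x y) in
noncomputable def lxRatio (t : ℝ) : ℝ :=
  (‖t • x + (1 - t) • y‖ ^ 2 + ‖(1 - t) • x + t • y‖ ^ 2) / ‖x + y‖ ^ 2

theorem lxRatio_le_two (h : ‖x + y‖ = ‖x - y‖) {t : ℝ} (ht : t ∈ Icc (0 : ℝ) 1) :
    lxRatio x y t ≤ 2 := by
  have h₁ := norm_smul_add_one_sub_smul_le_of_norm_add_eq_norm_sub h ht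
  have h₂ := norm_smul_add_one_sub_smul_le_of_norm_add_eq_norm_sub
    (norm_add_eq_norm_sub_comm h) ht
  rw [add_comm y, add_comm (t • y)] at h₂
  refine div_le_of_le_mul₀ (by positivity) zero_le_two ?_
  nlinarith [norm_nonneg (t • x + (1 - t) • y), norm_nonneg ((1 - t) • x + t • y)]

theorem lipschitzOnWith_lxRatio (h : ‖x + y‖ = ‖x - y‖) :
    LipschitzOnWith 4 (lxRatio x y) (Icc 0 1) := by
  refine LipschitzOnWith.of_dist_le_mul fun t ht s hs => ?_
  have h₁ := abs_norm_sq_sub_norm_sq_le_of_norm_add_eq_norm_sub h ht hs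
  have h₂ := abs_norm_sq_sub_norm_sq_le_of_norm_add_eq_norm_sub (norm_add_eq_norm_sub_comm h) ht hs
  rw [add_comm y, add_comm (t • y), add_comm (s • y)] at h₂
  rw [Real.dist_eq, Real.dist_eq, lxRatio, lxRatio, div_sub_div_same, abs_div,
    abs_of_nonneg (sq_nonneg ‖x + y‖)]
  refine div_le_of_le_mul₀ (by positivity) (by positivity) ?_
  push_cast
  calc _ ≤ |‖t • x + (1 - t) • y‖ ^ 2 - ‖s • x + (1 - s) • y‖ ^ 2|
        + |‖(1 - t) • x + t • y‖ ^ 2 - ‖(1 - s) • x + s • y‖ ^ 2| := by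
        rw [add_sub_add_comm]; exact abs_add_le _ _
    _ ≤ 4 * |t - s| * ‖x + y‖ ^ 2 := by linarith

theorem LX_eq_iSup_lxRatio (t : ℝ) :
    LX X t = ⨆ p : {p : X × X // p ≠ (0, 0) ∧ ‖p.1 + p.2‖ = ‖p.1 - p.2‖},
      lxRatio p.1.1 p.1.2 t := by
  rw [LX, iSup]
  congr 1
  ext r
  constructor
  · rintro ⟨x, y, hxy, h, rfl⟩
    exact ⟨⟨(x, y), hxy, h⟩, rfl⟩
  · rintro ⟨⟨⟨x, y⟩, hxy, h⟩, rfl⟩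
    exact ⟨x, y, hxy, h, rfl⟩

end IsoscelesOrthogonal

theorem stmt_5_general (X : Type*) [NormedAddCommGroup X] [NormedSpace ℝ X] :
    ContinuousOn (LX X) (Set.Ico (0 : ℝ) (1 / 2)) := by
  have hLip : LipschitzOnWith 4 (LX X) (Icc 0 1) := by
    simp only [funext LX_eq_iSup_lxRatio]
    exact LipschitzOnWith.ciSup (fun p => lipschitzOnWith_lxRatio p.2.2)
      fun t ht => ⟨2, forall_mem_range.2 fun p => lxRatio_le_two p.2.2 ht⟩
  exact hLip.continuousOn.mono (Ico_subset_Icc_self.trans (Icc_subset_Icc_right (by norm_num)))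

theorem stmt_5 (X : Type*) [NormedAddCommGroup X] [NormedSpace ℝ X] [CompleteSpace X]
    (hdim : 2 ≤ Module.rank ℝ X) :
    ContinuousOn (LX X) (Set.Ico (0 : ℝ) (1 / 2)) :=
  stmt_5_general X
end

section
/- Let X be a real Banach space of dimension at least 2. Then for every t ∈ [0, 1/2), L_X(t) = (1/2)·γ_X(1 − 2t). -/
/-- Yang's function . -/
noncomputable def gammaX (X : Type*) [NormedAddCommGroup X] [NormedSpace ℝ X] (t : ℝ) : ℝ :=
  sSup {r : ℝ | ∃ x y : X, ‖x‖ = 1 ∧ ‖y‖ = 1 ∧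
    r = (‖x + t • y‖ ^ 2 + ‖x - t • y‖ ^ 2) / 2}

open Pointwise

section

variable {X : Type*} [NormedAddCommGroup X] [NormedSpace ℝ X]

lemma add_ne_zero_of_norm_add_eq_norm_sub {x y : X} (hxy : (x, y) ≠ (0, 0))
    (h : ‖x + y‖ = ‖x - y‖) : x + y ≠ 0 := by
  intro hsum
  have hdiff : x - y = 0 := norm_eq_zero.mp (h ▸ hsum ▸ norm_zero)
  have hx : x = 0 := by linear_combination (norm := module) (1 / 2 : ℝ) • (hsum + hdiff)
  have hy : y = 0 := by linear_combination (norm := module) (1 / 2 : ℝ) • (hsum - hdiff)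
  exact hxy (by rw [hx, hy])

lemma norm_sq_add_norm_sq_combo_eq (t : ℝ) (x y : X) :
    ‖t • x + (1 - t) • y‖ ^ 2 + ‖(1 - t) • x + t • y‖ ^ 2
      = (‖(x + y) + (1 - 2 * t) • (x - y)‖ ^ 2 + ‖(x + y) - (1 - 2 * t) • (x - y)‖ ^ 2) / 4 := by
  have h₁ : t • x + (1 - t) • y = (1 / 2 : ℝ) • ((x + y) - (1 - 2 * t) • (x - y)) := by module
  have h₂ : (1 - t) • x + t • y = (1 / 2 : ℝ) • ((x + y) + (1 - 2 * t) • (x - y)) := by module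
  rw [h₁, h₂, norm_smul, norm_smul, Real.norm_of_nonneg (by norm_num : (0 : ℝ) ≤ 1 / 2)]
  ring

lemma norm_sq_add_norm_sq_smul (c s : ℝ) (u v : X) :
    ‖c • u + s • c • v‖ ^ 2 + ‖c • u - s • c • v‖ ^ 2
      = c ^ 2 * (‖u + s • v‖ ^ 2 + ‖u - s • v‖ ^ 2) := by
  rw [smul_comm s c v, ← smul_add, ← smul_sub, norm_smul, norm_smul, Real.norm_eq_abs]
  simp only [mul_pow, sq_abs]
  ring

lemma isoscelesRatio_set_eq_half_smul (t : ℝ) :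
    {r : ℝ | ∃ x y : X, (x, y) ≠ (0, 0) ∧ ‖x + y‖ = ‖x - y‖ ∧
      r = (‖t • x + (1 - t) • y‖ ^ 2 + ‖(1 - t) • x + t • y‖ ^ 2) / ‖x + y‖ ^ 2}
      = (1 / 2 : ℝ) • {r : ℝ | ∃ x y : X, ‖x‖ = 1 ∧ ‖y‖ = 1 ∧
          r = (‖x + (1 - 2 * t) • y‖ ^ 2 + ‖x - (1 - 2 * t) • y‖ ^ 2) / 2} := by
  ext r
  constructor
  · rintro ⟨x, y, hxy, hI, rfl⟩
    have hc : 0 < ‖x + y‖ := norm_pos_iff.mpr (add_ne_zero_of_norm_add_eq_norm_sub hxy hI)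
    set c := ‖x + y‖
    have hunit : ∀ w : X, ‖w‖ = c → ‖c⁻¹ • w‖ = 1 := fun w hw => by
      rw [norm_smul, norm_inv, Real.norm_of_nonneg hc.le, hw, inv_mul_cancel₀ hc.ne']
    refine ⟨_, ⟨c⁻¹ • (x + y), c⁻¹ • (x - y), hunit _ rfl, hunit _ hI.symm, rfl⟩, ?_⟩
    dsimp only
    rw [smul_eq_mul, norm_sq_add_norm_sq_combo_eq, norm_sq_add_norm_sq_smul]
    field_simp
    ring
  · rintro ⟨_, ⟨a, b, ha, hb, rfl⟩, rfl⟩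
    have hsum : (1 / 2 : ℝ) • (a + b) + (1 / 2 : ℝ) • (a - b) = a := by module
    have hdiff : (1 / 2 : ℝ) • (a + b) - (1 / 2 : ℝ) • (a - b) = b := by module
    refine ⟨(1 / 2 : ℝ) • (a + b), (1 / 2 : ℝ) • (a - b), ?_, by rw [hsum, hdiff, ha, hb], ?_⟩
    · intro h
      obtain ⟨h₁, h₂⟩ := Prod.mk.inj h
      apply one_ne_zero (α := ℝ)
      rw [← ha, ← hsum, h₁, h₂, add_zero, norm_zero]
    · dsimp only
      rw [norm_sq_add_norm_sq_combo_eq, hsum, hdiff, ha, smul_eq_mul]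
      ring

end

theorem stmt_7_general (X : Type*) [NormedAddCommGroup X] [NormedSpace ℝ X]
    (t : ℝ) :
    LX X t = (1 / 2) * gammaX X (1 - 2 * t) := by
  rw [LX, gammaX, isoscelesRatio_set_eq_half_smul, Real.sSup_smul_of_nonneg (by norm_num),
    smul_eq_mul]

theorem stmt_7 (X : Type*) [NormedAddCommGroup X] [NormedSpace ℝ X] [CompleteSpace X]
    (hdim : 2 ≤ Module.rank ℝ X) (t : ℝ) (ht : t ∈ Set.Ico (0 : ℝ) (1 / 2)) :
    LX X t = (1 / 2) * gammaX X (1 - 2 * t) :=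
  stmt_7_general X t
end

section
/- Let 1 < p < ∞ and let X = ℓ^p be the Banach space of real sequences (x_i) with Σ|x_i|^p < ∞, normed by ‖x‖ = (Σ|x_i|^p)^{1/p}. Then for every t ∈ [0, 1/2), L_X(t) ≥ 2^{1 − 2/p}·((1−t)^p + t^p)^{2/p}. Moreover, if 2 ≤ p < ∞, then L_X(t) = 2^{1 − 2/p}·((1−t)^p + t^p)^{2/p}. -/
/-!
The lower bound is attained at `x = e₀`, `y = e₁`. For the upper bound (`p ≥ 2`), given
`‖x + y‖ = ‖x - y‖` put `f = x + y`, `g = x - y`, `s = 1 - 2t`, so that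
`2 (t x + (1 - t) y) = f - s g` and `2 ((1 - t) x + t y) = f + s g`. Hanner's inequality, proved
coordinatewise from the scalar bound `|A + B|^p + |A - B|^p ≤ α(r) |A|^p + β(r) |B|^p` (sharp at
`|B| = r |A|`), gives `‖f + s g‖^p + ‖f - s g‖^p ≤ ((1 + s)^p + (1 - s)^p) ‖f‖^p` when `‖g‖ = ‖f‖`,
and the power-mean inequality `a² + b² ≤ 2^(1 - 2/p) (a^p + b^p)^(2/p)` turns `p`-th powers
into squares.
-/

open Real Set

section IsoscelesOrthogonal

variable {X : Type*} [NormedAddCommGroup X] [NormedSpace ℝ X]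

lemma norm_smul_add_smul_le_of_norm_add_eq_norm_sub {x y : X} (h : ‖x + y‖ = ‖x - y‖)
    (a b : ℝ) : ‖a • (x + y) + b • (x - y)‖ ≤ (|a| + |b|) * ‖x + y‖ := by
  calc _ ≤ ‖a • (x + y)‖ + ‖b • (x - y)‖ := norm_add_le _ _
    _ = _ := by rw [norm_smul, norm_smul, ← h, Real.norm_eq_abs, Real.norm_eq_abs, add_mul]

lemma le_LX {x y : X} (hxy : (x, y) ≠ (0, 0)) (h : ‖x + y‖ = ‖x - y‖) (t : ℝ) :
    (‖t • x + (1 - t) • y‖ ^ 2 + ‖(1 - t) • x + t • y‖ ^ 2) / ‖x + y‖ ^ 2 ≤ LX X t := by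
  refine le_csSup ⟨2 * (1 / 2 + |1 / 2 - t|) ^ 2, ?_⟩ ⟨x, y, hxy, h, rfl⟩
  rintro _ ⟨x, y, -, h, rfl⟩
  have hu := norm_smul_add_smul_le_of_norm_add_eq_norm_sub h (1 / 2) (-(1 / 2 - t))
  have hv := norm_smul_add_smul_le_of_norm_add_eq_norm_sub h (1 / 2) (1 / 2 - t)
  rw [show (1 / 2 : ℝ) • (x + y) + (-(1 / 2 - t)) • (x - y) = t • x + (1 - t) • y by module,
    abs_neg] at hu
  rw [show (1 / 2 : ℝ) • (x + y) + (1 / 2 - t) • (x - y) = (1 - t) • x + t • y by module] at hv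
  have hu2 := pow_le_pow_left₀ (norm_nonneg _) hu 2
  have hv2 := pow_le_pow_left₀ (norm_nonneg _) hv 2
  rw [mul_pow] at hu2 hv2
  refine div_le_of_le_mul₀ (by positivity) (by positivity) ?_
  linarith

lemma LX_le {t c : ℝ} (hc : 0 ≤ c) (h : ∀ x y : X, ‖x + y‖ = ‖x - y‖ →
      ‖t • x + (1 - t) • y‖ ^ 2 + ‖(1 - t) • x + t • y‖ ^ 2 ≤ c * ‖x + y‖ ^ 2) :
    LX X t ≤ c :=
  Real.sSup_le (by
    rintro _ ⟨x, y, -, hxy, rfl⟩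
    exact div_le_of_le_mul₀ (by positivity) hc (h x y hxy)) hc

end IsoscelesOrthogonal

lemma sq_rpow_div_two {a : ℝ} (ha : 0 ≤ a) (p : ℝ) : (a ^ 2) ^ (p / 2) = a ^ p := by
  rw [← Real.rpow_natCast_mul ha]
  norm_num
  ring_nf

lemma Real.rpow_add_le_mul_rpow_add_rpow {a b q : ℝ} (ha : 0 ≤ a) (hb : 0 ≤ b) (hq : 1 ≤ q) :
    (a + b) ^ q ≤ 2 ^ (q - 1) * (a ^ q + b ^ q) := by
  lift a to NNReal using ha
  lift b to NNReal using hb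
  exact_mod_cast NNReal.rpow_add_le_mul_rpow_add_rpow a b hq

lemma sq_add_sq_le_rpow_add_rpow {p a b : ℝ} (hp : 2 ≤ p) (ha : 0 ≤ a) (hb : 0 ≤ b) :
    a ^ 2 + b ^ 2 ≤ 2 ^ (1 - 2 / p) * (a ^ p + b ^ p) ^ (2 / p) := by
  have h := Real.rpow_add_le_mul_rpow_add_rpow (sq_nonneg a) (sq_nonneg b) (q := p / 2)
    (by linarith)
  rw [sq_rpow_div_two ha, sq_rpow_div_two hb] at h
  have h' := Real.rpow_le_rpow (by positivity) h (by positivity : (0 : ℝ) ≤ 2 / p)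
  rwa [← Real.rpow_mul (by positivity), Real.mul_rpow (by positivity) (by positivity),
    ← Real.rpow_mul zero_le_two, show p / 2 * (2 / p) = 1 by field_simp,
    show (p / 2 - 1) * (2 / p) = 1 - 2 / p by field_simp, Real.rpow_one] at h'

lemma abs_add_rpow_add_abs_sub_rpow_le {p : ℝ} (hp : 2 ≤ p) (A B : ℝ) :
    |A + B| ^ p + |A - B| ^ p ≤ 2 ^ (p - 1) * (|A| ^ p + |B| ^ p) := by
  simp only [← sq_rpow_div_two (abs_nonneg _), sq_abs]
  calc ((A + B) ^ 2) ^ (p / 2) + ((A - B) ^ 2) ^ (p / 2)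
      ≤ ((A + B) ^ 2 + (A - B) ^ 2) ^ (p / 2) :=
        Real.add_rpow_le_rpow_add (sq_nonneg _) (sq_nonneg _) (by linarith)
    _ = 2 ^ (p / 2) * (A ^ 2 + B ^ 2) ^ (p / 2) := by
        rw [← Real.mul_rpow zero_le_two (by positivity)]
        ring_nf
    _ ≤ 2 ^ (p / 2) * (2 ^ (p / 2 - 1) * ((A ^ 2) ^ (p / 2) + (B ^ 2) ^ (p / 2))) := by
        gcongr
        exact Real.rpow_add_le_mul_rpow_add_rpow (sq_nonneg _) (sq_nonneg _) (by linarith)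
    _ = 2 ^ (p - 1) * ((A ^ 2) ^ (p / 2) + (B ^ 2) ^ (p / 2)) := by
        rw [← mul_assoc, ← Real.rpow_add two_pos]
        ring_nf

lemma abs_add_rpow_add_abs_sub_rpow (p A B : ℝ) :
    |A + B| ^ p + |A - B| ^ p = (|A| + |B|) ^ p + |(|A| - |B|)| ^ p := by
  rcases le_total 0 A with hA | hA <;> rcases le_total 0 B with hB | hB
  · rw [abs_of_nonneg hA, abs_of_nonneg hB, abs_of_nonneg (by linarith : 0 ≤ A + B)]
  · rw [abs_of_nonneg hA, abs_of_nonpos hB, abs_of_nonneg (by linarith : 0 ≤ A - B), add_comm,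
      ← sub_eq_add_neg, sub_neg_eq_add]
  · rw [abs_of_nonpos hA, abs_of_nonneg hB, abs_of_nonpos (by linarith : A - B ≤ 0),
      show -A - B = -(A + B) by ring, abs_neg]
    ring_nf
  · rw [abs_of_nonpos hA, abs_of_nonpos hB, abs_of_nonpos (by linarith : A + B ≤ 0),
      abs_sub_comm A B]
    ring_nf

noncomputable def hannerAlpha (p r : ℝ) : ℝ := (1 + r) ^ (p - 1) + (1 - r) ^ (p - 1)

/-- For `0 < r ≤ 1` this is Hanner's `((1 + r)^(p-1) - (1 - r)^(p-1)) / r^(p-1)`; written in terms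
of `r⁻¹` it is visibly antitone, by convexity of `x ↦ x^(p-1)`. -/
noncomputable def hannerBeta (p r : ℝ) : ℝ := (r⁻¹ + 1) ^ (p - 1) - (r⁻¹ - 1) ^ (p - 1)

lemma hannerBeta_mul_rpow_sub_one {r : ℝ} (p : ℝ) (hr0 : 0 < r) (hr1 : r ≤ 1) :
    hannerBeta p r * r ^ (p - 1) = (1 + r) ^ (p - 1) - (1 - r) ^ (p - 1) := by
  have hinv : 1 ≤ r⁻¹ := one_le_inv₀ hr0 |>.2 hr1
  rw [hannerBeta, sub_mul, ← Real.mul_rpow (by linarith) hr0.le,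
    ← Real.mul_rpow (by linarith) hr0.le, add_mul, sub_mul, inv_mul_cancel₀ hr0.ne', one_mul]

lemma hannerAlpha_add_hannerBeta_mul_rpow {p r : ℝ} (hp : 1 < p) (hr0 : 0 < r) (hr1 : r ≤ 1) :
    hannerAlpha p r + hannerBeta p r * r ^ p = (1 + r) ^ p + (1 - r) ^ p := by
  have hsplit : ∀ x : ℝ, 0 ≤ x → x ^ p = x ^ (p - 1) * x := fun x hx => by
    rw [← Real.rpow_add_one' hx (by linarith), sub_add_cancel]
  rw [hsplit r hr0.le, hsplit (1 + r) (by linarith), hsplit (1 - r) (by linarith), ← mul_assoc,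
    hannerBeta_mul_rpow_sub_one p hr0 hr1, hannerAlpha]
  ring

lemma hannerBeta_one {p : ℝ} (hp : 1 < p) : hannerBeta p 1 = 2 ^ (p - 1) := by
  rw [hannerBeta, inv_one, sub_self, Real.zero_rpow (by linarith), sub_zero]
  norm_num

lemma monotoneOn_add_one_rpow_sub_sub_one_rpow {q : ℝ} (hq : 1 ≤ q) :
    MonotoneOn (fun u : ℝ => (u + 1) ^ q - (u - 1) ^ q) (Ici 1) := by
  have hderiv : ∀ u : ℝ, HasDerivAt (fun u : ℝ => (u + 1) ^ q - (u - 1) ^ q)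
      (q * (u + 1) ^ (q - 1) - q * (u - 1) ^ (q - 1)) u := fun u =>
    ((Real.hasDerivAt_rpow_const (Or.inr hq)).comp_add_const u 1).sub
      ((Real.hasDerivAt_rpow_const (Or.inr hq)).comp_sub_const u 1)
  refine monotoneOn_of_hasDerivWithinAt_nonneg (convex_Ici 1)
    (fun u _ => (hderiv u).continuousAt.continuousWithinAt)
    (fun u _ => (hderiv u).hasDerivWithinAt) ?_
  rw [interior_Ici]
  intro u hu
  have : (u - 1) ^ (q - 1) ≤ (u + 1) ^ (q - 1) :=
    Real.rpow_le_rpow (by linarith [mem_Ioi.1 hu]) (by linarith) (by linarith)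
  nlinarith

lemma hannerBeta_antitoneOn {p : ℝ} (hp : 2 ≤ p) : AntitoneOn (hannerBeta p) (Ioc 0 1) := by
  intro a ha b hb hab
  exact monotoneOn_add_one_rpow_sub_sub_one_rpow (by linarith) (one_le_inv₀ hb.1 |>.2 hb.2)
    (one_le_inv₀ ha.1 |>.2 ha.2) (inv_anti₀ ha.1 hab)

lemma two_rpow_le_hannerBeta {p r : ℝ} (hp : 2 ≤ p) (hr : r ∈ Ioc 0 1) :
    2 ^ (p - 1) ≤ hannerBeta p r := by
  simpa [hannerBeta_one (by linarith : 1 < p)] using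
    hannerBeta_antitoneOn hp hr ⟨one_pos, le_rfl⟩ hr.2

lemma one_add_rpow_add_one_sub_rpow_le_hanner {p r R : ℝ} (hp : 2 ≤ p) (hr : r ∈ Ioc 0 1)
    (hR : R ∈ Icc 0 1) :
    (1 + R) ^ p + (1 - R) ^ p ≤ hannerAlpha p r + hannerBeta p r * R ^ p := by
  obtain ⟨hr0, hr1⟩ := hr
  set φ : ℝ → ℝ := fun R => hannerAlpha p r + hannerBeta p r * R ^ p - (1 + R) ^ p - (1 - R) ^ p
  have hp1 : 1 ≤ p := by linarith
  have hφ : ∀ R, HasDerivAt φ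
      (hannerBeta p r * (p * R ^ (p - 1)) - p * (1 + R) ^ (p - 1) + p * (1 - R) ^ (p - 1)) R := by
    intro R
    exact (((Real.hasDerivAt_rpow_const (Or.inr hp1)).const_mul (hannerBeta p r)).const_add
      (hannerAlpha p r) |>.sub ((Real.hasDerivAt_rpow_const (Or.inr hp1)).comp_const_add 1 R)
      |>.sub ((Real.hasDerivAt_rpow_const (Or.inr hp1)).comp_const_sub 1 R)).congr_deriv (by ring)
  -- Since `β` is antitone, `φ'` changes sign at `R = r`, where `φ` vanishes.
  set φ' : ℝ → ℝ := fun R => p * R ^ (p - 1) * (hannerBeta p r - hannerBeta p R)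
  have hφ' : ∀ R ∈ Ioo (0 : ℝ) 1, HasDerivAt φ (φ' R) R := by
    intro R ⟨hR0, hR1⟩
    convert hφ R using 1
    linear_combination (-p) * hannerBeta_mul_rpow_sub_one p hR0 hR1.le
  have hcont : Continuous φ := continuous_iff_continuousAt.2 fun R => (hφ R).continuousAt
  have hφr : φ r = 0 := by
    simp only [φ]
    rw [hannerAlpha_add_hannerBeta_mul_rpow (by linarith) hr0 hr1]
    ring
  have hanti : AntitoneOn φ (Icc 0 r) := by
    refine antitoneOn_of_hasDerivWithinAt_nonpos (f' := φ') (convex_Icc 0 r) hcont.continuousOn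
      (fun R hR => ?_) fun R hR => ?_ <;> rw [interior_Icc] at hR
    · exact (hφ' R ⟨hR.1, hR.2.trans_le hr1⟩).hasDerivWithinAt
    · exact mul_nonpos_of_nonneg_of_nonpos (mul_nonneg (by linarith) (rpow_nonneg hR.1.le _))
        (sub_nonpos.2 (hannerBeta_antitoneOn hp ⟨hR.1, hR.2.le.trans hr1⟩ ⟨hr0, hr1⟩ hR.2.le))
  have hmono : MonotoneOn φ (Icc r 1) := by
    refine monotoneOn_of_hasDerivWithinAt_nonneg (f' := φ') (convex_Icc r 1) hcont.continuousOn
      (fun R hR => ?_) fun R hR => ?_ <;> rw [interior_Icc] at hR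
    · exact (hφ' R ⟨hr0.trans hR.1, hR.2⟩).hasDerivWithinAt
    · exact mul_nonneg (mul_nonneg (by linarith) (rpow_nonneg (hr0.trans hR.1).le _))
        (sub_nonneg.2 (hannerBeta_antitoneOn hp ⟨hr0, hr1⟩ ⟨hr0.trans hR.1, hR.2.le⟩ hR.1.le))
  have : 0 ≤ φ R := by
    rcases le_total R r with h | h
    · exact hφr ▸ hanti ⟨hR.1, h⟩ ⟨hr0.le, le_rfl⟩ h
    · exact hφr ▸ hmono ⟨le_rfl, hr1⟩ ⟨h, hR.2⟩ h
  simp only [φ] at this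
  linarith

lemma one_add_rpow_add_abs_one_sub_rpow_le_hanner {p r R : ℝ} (hp : 2 ≤ p) (hr : r ∈ Ioc 0 1)
    (hR : 0 ≤ R) :
    (1 + R) ^ p + |1 - R| ^ p ≤ hannerAlpha p r + hannerBeta p r * R ^ p := by
  rcases le_total R 1 with hR1 | hR1
  · rw [abs_of_nonneg (by linarith)]
    exact one_add_rpow_add_one_sub_rpow_le_hanner hp hr ⟨hR, hR1⟩
  -- For `R ≥ 1`, Clarkson's inequality suffices since `β r ≥ 2^(p-1)` and `α r + β r ≥ 2^p`.
  have hclarkson := abs_add_rpow_add_abs_sub_rpow_le hp R 1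
  rw [abs_of_nonneg (by linarith : 0 ≤ R + 1), abs_of_nonneg hR, abs_one, Real.one_rpow,
    add_comm R, abs_sub_comm] at hclarkson
  have hβ := two_rpow_le_hannerBeta hp hr
  have hαβ := one_add_rpow_add_one_sub_rpow_le_hanner hp hr ⟨zero_le_one, le_rfl⟩
  rw [sub_self, Real.zero_rpow (by linarith), Real.one_rpow, mul_one, add_zero,
    one_add_one_eq_two] at hαβ
  have hRp : 1 ≤ R ^ p := Real.one_le_rpow hR1 (by linarith)
  have : (2 : ℝ) ^ p = 2 ^ (p - 1) * 2 := by
    rw [← Real.rpow_add_one' zero_le_two (by linarith), sub_add_cancel]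
  nlinarith [mul_nonneg (sub_nonneg.2 hβ) (sub_nonneg.2 hRp)]

lemma add_rpow_add_abs_sub_rpow_le_hanner {p r a b : ℝ} (hp : 2 ≤ p) (hr : r ∈ Ioc 0 1)
    (ha : 0 ≤ a) (hb : 0 ≤ b) :
    (a + b) ^ p + |a - b| ^ p ≤ hannerAlpha p r * a ^ p + hannerBeta p r * b ^ p := by
  rcases ha.eq_or_lt with rfl | ha
  · have h2 : (2 : ℝ) ≤ 2 ^ (p - 1) := by
      simpa using Real.rpow_le_rpow_of_exponent_le one_le_two (by linarith : 1 ≤ p - 1)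
    have := two_rpow_le_hannerBeta hp hr
    rw [zero_add, zero_sub, abs_neg, abs_of_nonneg hb, Real.zero_rpow (by linarith), mul_zero,
      zero_add]
    nlinarith [Real.rpow_nonneg hb p]
  obtain ⟨R, hR, rfl⟩ : ∃ R, 0 ≤ R ∧ b = a * R := ⟨b / a, by positivity, by field_simp⟩
  have key := one_add_rpow_add_abs_one_sub_rpow_le_hanner hp hr hR
  rw [← mul_one_add, ← mul_one_sub, abs_mul, abs_of_pos ha, Real.mul_rpow ha.le (by linarith),
    Real.mul_rpow ha.le (abs_nonneg _), Real.mul_rpow ha.le hR]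
  nlinarith [mul_le_mul_of_nonneg_left key (Real.rpow_nonneg ha.le p)]

lemma abs_add_rpow_add_abs_sub_rpow_le_hanner {p r : ℝ} (hp : 2 ≤ p) (hr : r ∈ Ioc 0 1)
    (A B : ℝ) :
    |A + B| ^ p + |A - B| ^ p ≤ hannerAlpha p r * |A| ^ p + hannerBeta p r * |B| ^ p := by
  rw [abs_add_rpow_add_abs_sub_rpow]
  exact add_rpow_add_abs_sub_rpow_le_hanner hp hr (abs_nonneg A) (abs_nonneg B)

namespace lp

variable {ι : Type*} {p t : ℝ}

lemma hasSum_abs_rpow (hp : 0 < p) (f : lp (fun _ : ι => ℝ) (ENNReal.ofReal p)) :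
    HasSum (fun i => |f i| ^ p) (‖f‖ ^ p) := by
  have h := lp.hasSum_norm (by rwa [ENNReal.toReal_ofReal hp.le]) f
  simpa only [ENNReal.toReal_ofReal hp.le, Real.norm_eq_abs] using h

variable [Fact (1 ≤ ENNReal.ofReal p)]

lemma norm_single_add_single [DecidableEq ι] (hp : 0 < p) {i j : ι} (hij : i ≠ j) (a b : ℝ) :
    ‖(lp.single (ENNReal.ofReal p) i a + lp.single (ENNReal.ofReal p) j b :
      lp (fun _ : ι => ℝ) (ENNReal.ofReal p))‖ =
      (|a| ^ p + |b| ^ p) ^ (1 / p) := by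
  have hsum : HasSum (fun k => |(lp.single (ENNReal.ofReal p) i a +
      lp.single (ENNReal.ofReal p) j b : lp (fun _ : ι => ℝ) (ENNReal.ofReal p)) k| ^ p)
      (|a| ^ p + |b| ^ p) := by
    convert (hasSum_pi_single i (|a| ^ p)).add (hasSum_pi_single j (|b| ^ p)) with k
    by_cases hki : k = i <;> by_cases hkj : k = j <;>
      simp_all [Real.zero_rpow hp.ne']
  rw [← (hasSum_abs_rpow hp _).unique hsum, one_div, Real.rpow_rpow_inv (norm_nonneg _) hp.ne']

lemma norm_add_smul_rpow_add_norm_sub_smul_rpow_le (hp : 2 ≤ p) {s : ℝ} (hs : s ∈ Ioc 0 1)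
    {f g : lp (fun _ : ι => ℝ) (ENNReal.ofReal p)} (hfg : ‖g‖ = ‖f‖) :
    ‖f + s • g‖ ^ p + ‖f - s • g‖ ^ p ≤ ((1 + s) ^ p + (1 - s) ^ p) * ‖f‖ ^ p := by
  have hp0 : 0 < p := by linarith
  have hsum := hasSum_le (fun k => abs_add_rpow_add_abs_sub_rpow_le_hanner hp hs (f k) ((s • g) k))
    ((hasSum_abs_rpow hp0 (f + s • g)).add (hasSum_abs_rpow hp0 (f - s • g)))
    (((hasSum_abs_rpow hp0 f).mul_left _).add ((hasSum_abs_rpow hp0 (s • g)).mul_left _))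
  rw [norm_smul, hfg, Real.norm_of_nonneg hs.1.le, Real.mul_rpow hs.1.le (norm_nonneg f),
    ← hannerAlpha_add_hannerBeta_mul_rpow (by linarith) hs.1 hs.2] at *
  linarith

lemma norm_rpow_add_norm_rpow_le_of_norm_add_eq_norm_sub (hp : 2 ≤ p) (ht : t ∈ Ico 0 (1 / 2))
    {x y : lp (fun _ : ι => ℝ) (ENNReal.ofReal p)} (h : ‖x + y‖ = ‖x - y‖) :
    ‖t • x + (1 - t) • y‖ ^ p + ‖(1 - t) • x + t • y‖ ^ p ≤
      ((1 - t) ^ p + t ^ p) * ‖x + y‖ ^ p := by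
  obtain ⟨ht0, ht1⟩ := ht
  have key := norm_add_smul_rpow_add_norm_sub_smul_rpow_le hp (s := 1 - 2 * t)
    ⟨by linarith, by linarith⟩ h.symm
  rw [show x + y + (1 - 2 * t) • (x - y) = (2 : ℝ) • ((1 - t) • x + t • y) by module,
    show x + y - (1 - 2 * t) • (x - y) = (2 : ℝ) • (t • x + (1 - t) • y) by module,
    show 1 + (1 - 2 * t) = 2 * (1 - t) by ring, show 1 - (1 - 2 * t) = 2 * t by ring,
    norm_smul, norm_smul, Real.norm_two, Real.mul_rpow zero_le_two (norm_nonneg _),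
    Real.mul_rpow zero_le_two (norm_nonneg _), Real.mul_rpow zero_le_two (by linarith),
    Real.mul_rpow zero_le_two ht0] at key
  exact le_of_mul_le_mul_left (by linear_combination key) (by positivity : (0 : ℝ) < 2 ^ p)

lemma LX_le (hp : 2 ≤ p) (ht : t ∈ Ico 0 (1 / 2)) :
    LX (lp (fun _ : ι => ℝ) (ENNReal.ofReal p)) t ≤
      2 ^ (1 - 2 / p) * ((1 - t) ^ p + t ^ p) ^ (2 / p) := by
  have hW : 0 ≤ (1 - t) ^ p + t ^ p :=
    add_nonneg (rpow_nonneg (by linarith [ht.2]) _) (rpow_nonneg ht.1 _)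
  have h2p : 0 ≤ 2 / p := div_nonneg zero_le_two (by linarith)
  refine _root_.LX_le (by positivity) fun x y h => ?_
  calc _ ≤ 2 ^ (1 - 2 / p) * (‖t • x + (1 - t) • y‖ ^ p + ‖(1 - t) • x + t • y‖ ^ p) ^ (2 / p) :=
        sq_add_sq_le_rpow_add_rpow hp (norm_nonneg _) (norm_nonneg _)
    _ ≤ 2 ^ (1 - 2 / p) * (((1 - t) ^ p + t ^ p) * ‖x + y‖ ^ p) ^ (2 / p) := by
        gcongr
        exact norm_rpow_add_norm_rpow_le_of_norm_add_eq_norm_sub hp ht h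
    _ = _ := by
        rw [Real.mul_rpow hW (by positivity), ← Real.rpow_mul (norm_nonneg _),
          mul_div_cancel₀ _ (by linarith : p ≠ 0), Real.rpow_two]
        ring

lemma le_LX [DecidableEq ι] {i j : ι} (hij : i ≠ j) (hp : 0 < p) (ht0 : 0 ≤ t) (ht1 : t ≤ 1) :
    2 ^ (1 - 2 / p) * ((1 - t) ^ p + t ^ p) ^ (2 / p) ≤
      LX (lp (fun _ : ι => ℝ) (ENNReal.ofReal p)) t := by
  set e : ι → lp (fun _ : ι => ℝ) (ENNReal.ofReal p) := fun k => lp.single (ENNReal.ofReal p) k 1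
  have hsq (a b : ℝ) : ‖(lp.single (ENNReal.ofReal p) i a + lp.single (ENNReal.ofReal p) j b :
      lp (fun _ : ι => ℝ) (ENNReal.ofReal p))‖ ^ 2 = (|a| ^ p + |b| ^ p) ^ (2 / p) := by
    rw [norm_single_add_single hp hij, ← Real.rpow_natCast, ← Real.rpow_mul (by positivity)]
    norm_num [div_eq_mul_inv, mul_comm]
  have hne : (e i, e j) ≠ (0, 0) := fun h => by
    simpa [e] using congrArg (fun z => z.1 i) h
  have hsub :
      e i - e j = lp.single (ENNReal.ofReal p) i 1 + lp.single (ENNReal.ofReal p) j (-1) := by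
    rw [sub_eq_add_neg, lp.single_neg]
  have hiso : ‖e i + e j‖ = ‖e i - e j‖ := by
    rw [hsub, norm_single_add_single hp hij, norm_single_add_single hp hij, abs_neg]
  convert _root_.le_LX hne hiso t using 1
  have hcomb (a b : ℝ) :
      a • e i + b • e j = lp.single (ENNReal.ofReal p) i a + lp.single (ENNReal.ofReal p) j b := by
    simp only [e, ← lp.single_smul, smul_eq_mul, mul_one]
  rw [hcomb, hcomb, hsq, hsq, show ‖e i + e j‖ ^ 2 = (|1| ^ p + |1| ^ p) ^ (2 / p) from hsq 1 1,
    abs_of_nonneg ht0, abs_of_nonneg (by linarith : 0 ≤ 1 - t), abs_one, Real.one_rpow,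
    one_add_one_eq_two, add_comm (t ^ p), Real.rpow_sub two_pos, Real.rpow_one]
  field_simp
  ring

end lp

theorem stmt_9 (p : ℝ) [Fact (1 ≤ ENNReal.ofReal p)] (hp : 1 < p)
    (t : ℝ) (ht : t ∈ Set.Ico (0 : ℝ) (1 / 2)) :
    (2 : ℝ) ^ (1 - 2 / p) * ((1 - t) ^ p + t ^ p) ^ (2 / p) ≤
        LX (lp (fun _ : ℕ => ℝ) (ENNReal.ofReal p)) t ∧
      (2 ≤ p →
        LX (lp (fun _ : ℕ => ℝ) (ENNReal.ofReal p)) t =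
          (2 : ℝ) ^ (1 - 2 / p) * ((1 - t) ^ p + t ^ p) ^ (2 / p)) := by
  have hlower := lp.le_LX (zero_ne_one : (0 : ℕ) ≠ 1) (by linarith) ht.1 (by linarith [ht.2])
  exact ⟨hlower, fun hp2 => (lp.LX_le hp2 ht).antisymm hlower⟩
end
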